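/- The map $\sigma \mapsto \mathrm{Sw}(\sigma)$ relabeling each non-root internal vertex of the sign tree $S(\sigma)$ by the binary string recording in which coordinates its sign sequence differs from its parent's, is a bijection between $d$-separable permutations of size $n$ and rooted plane trees with $n$ leaves in which every internal vertex has at least two children, the root is labeled by a sign sequence in $\{\pm1\}^{d-1}$, and every other internal vertex is labeled by a swap sequence, i.e., a nonzero element of $\{0,1\}^{d-1}$. -/

import Mathlib

/-- The block sum `σ₁ ⊕ₛ σ₂` with sign sequence `s : Fin d → Bool` (`true` = `+1`). -/
def blockSum {d n₁ n₂ : ℕ} (σ₁ : Fin n₁ → Fin d → Fin n₁) (σ₂ : Fin n₂ → Fin d → Fin n₂)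
    (s : Fin d → Bool) : Fin (n₁ + n₂) → Fin d → Fin (n₁ + n₂) :=
  fun i j => Fin.addCases
    (fun i₁ => if s j then Fin.castAdd n₂ (σ₁ i₁ j) else Fin.addNat (σ₁ i₁ j) n₂)
    (fun i₂ => if s j then Fin.natAdd n₁ (σ₂ i₂ j)
      else Fin.castLE (Nat.le_add_left n₂ n₁) (σ₂ i₂ j)) i

/-- `(d+1)`-separable permutations. -/
inductive IsSep (d : ℕ) : (n : ℕ) → (Fin n → Fin d → Fin n) → Prop
  | single (σ : Fin 1 → Fin d → Fin 1) : IsSep d 1 σ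
  | sum {n₁ n₂ : ℕ} (σ₁ : Fin n₁ → Fin d → Fin n₁) (σ₂ : Fin n₂ → Fin d → Fin n₂)
      (s : Fin d → Bool) : IsSep d n₁ σ₁ → IsSep d n₂ σ₂ →
      IsSep d (n₁ + n₂) (blockSum σ₁ σ₂ s)

/-- Sign trees: internal vertices labeled by sign sequences. -/
inductive SignTree (d : ℕ) : Type
  | leaf : SignTree d
  | node : (Fin d → Bool) → List (SignTree d) → SignTree d

mutual
  def treePerm {d : ℕ} : SignTree d → (n : ℕ) × (Fin n → Fin d → Fin n)
    | .leaf => ⟨1, fun _ _ => 0⟩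
    | .node s ts => treePermList s ts
  def treePermList {d : ℕ} (s : Fin d → Bool) :
      List (SignTree d) → (n : ℕ) × (Fin n → Fin d → Fin n)
    | [] => ⟨0, fun i _ => i⟩
    | t :: ts => ⟨(treePerm t).1 + (treePermList s ts).1,
        blockSum (treePerm t).2 (treePermList s ts).2 s⟩
end

/-- Swap trees: the root carries a sign sequence in `{±1}^d`; every other internal vertex
carries a binary string of length `d` (its swap sequence, required nonzero by validity)
recording in which coordinates its sign sequence differs from its parent's. -/
inductive SwapTree (d : ℕ) : Type
  | leaf : SwapTree d
  | node : (Fin d → Bool) → List (SwapTree d) → SwapTree d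

mutual
  /-- Recover the sign tree below a vertex whose parent carries sign sequence `par`, by
  flipping the coordinates indicated by each swap sequence. -/
  def toSign {d : ℕ} (par : Fin d → Bool) : SwapTree d → SignTree d
    | .leaf => .leaf
    | .node sw ts => .node (fun j => xor (par j) (sw j))
        (toSignList (fun j => xor (par j) (sw j)) ts)
  def toSignList {d : ℕ} (par : Fin d → Bool) : List (SwapTree d) → List (SignTree d)
    | [] => []
    | t :: ts => toSign par t :: toSignList par ts
end

/-- The sign tree encoded by a swap tree: the root label is itself a sign sequence, and
the labels of the other internal vertices are recovered from the swap sequences by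
exploring from the root down. -/
def swapToSign {d : ℕ} : SwapTree d → SignTree d
  | .leaf => .leaf
  | .node s ts => .node s (toSignList s ts)

mutual
  def numLeavesSw {d : ℕ} : SwapTree d → ℕ
    | .leaf => 1
    | .node _ ts => numLeavesSwList ts
  def numLeavesSwList {d : ℕ} : List (SwapTree d) → ℕ
    | [] => 0
    | t :: ts => numLeavesSw t + numLeavesSwList ts
end

mutual
  /-- Validity of a non-root subtree of a swap tree: internal vertices have at least two
  children and a nonzero swap sequence. -/
  def ValidSwapAux {d : ℕ} : SwapTree d → Prop
    | .leaf => True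
    | .node sw ts => 2 ≤ ts.length ∧ (∃ j, sw j = true) ∧ ValidSwapAuxList ts
  def ValidSwapAuxList {d : ℕ} : List (SwapTree d) → Prop
    | [] => True
    | t :: ts => ValidSwapAux t ∧ ValidSwapAuxList ts
end

/-- Validity of a swap tree: the root (labeled by an arbitrary sign sequence) has at
least two children if internal, and all other internal vertices carry nonzero swap
sequences and have at least two children. -/
def ValidSwap {d : ℕ} : SwapTree d → Prop
  | .leaf => True
  | .node _ ts => 2 ≤ ts.length ∧ ValidSwapAuxList ts


/-!
Relabeling by swap sequences, with inverse the relabeling from the root down, is a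
leaf-preserving bijection between valid swap trees and *canonical* sign trees (every
internal vertex has at least two children, adjacent internal vertices carry different
labels). It remains to see that `treePerm` maps canonical sign trees bijectively onto
separable permutations. Every separable permutation comes from some sign tree, and merging
each child into its parent when both carry the same label makes that tree canonical. For
injectivity, the root label is read off the permutation as the sign of any proper
block-sum splitting (comparing the first and the last position shows it is unique), and
the first child is the shortest prefix along which the permutation splits with that sign,
because a child with a different label admits no such splitting.
-/

abbrev SizedFn (d : ℕ) := (m : ℕ) × (Fin m → Fin d → Fin m)

namespace SizedFn

variable {d : ℕ}

def nil : SizedFn d := ⟨0, fun i _ => i⟩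

def sum (P Q : SizedFn d) (s : Fin d → Bool) : SizedFn d :=
  ⟨P.1 + Q.1, blockSum P.2 Q.2 s⟩

lemma size_sum (P Q : SizedFn d) (s : Fin d → Bool) : (P.sum Q s).1 = P.1 + Q.1 := rfl

/-- Values as natural numbers, set to `0` outside the domain, so that `omega` can
compare values of functions with different domains. -/
def val (P : SizedFn d) (i : ℕ) (j : Fin d) : ℕ :=
  if h : i < P.1 then P.2 ⟨i, h⟩ j else 0

lemma val_cases (P : SizedFn d) (i : ℕ) (j : Fin d) :
    (i < P.1 ∧ P.val i j < P.1) ∨ (P.1 ≤ i ∧ P.val i j = 0) := by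
  unfold val
  split
  · exact Or.inl ⟨by assumption, (P.2 _ j).isLt⟩
  · exact Or.inr ⟨by omega, rfl⟩

lemma val_lt (P : SizedFn d) {i : ℕ} (h : i < P.1) (j : Fin d) : P.val i j < P.1 := by
  simp only [val, dif_pos h, Fin.is_lt]

lemma ext {P Q : SizedFn d} (hsize : P.1 = Q.1) (hval : ∀ i j, P.val i j = Q.val i j) :
    P = Q := by
  obtain ⟨n, f⟩ := P
  obtain ⟨m, g⟩ := Q
  obtain rfl : n = m := hsize
  congr
  funext i j
  have := hval i j
  simp only [val, dif_pos i.isLt] at this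
  exact Fin.ext this

lemma val_sum (P Q : SizedFn d) (s : Fin d → Bool) (i : ℕ) (j : Fin d) :
    (P.sum Q s).val i j =
      if i < P.1 then (if s j then P.val i j else P.val i j + Q.1)
      else if i < P.1 + Q.1 then (if s j then P.1 + Q.val (i - P.1) j else Q.val (i - P.1) j)
      else 0 := by
  rcases lt_or_ge i P.1 with h | h
  · have hi : (⟨i, by omega⟩ : Fin (P.1 + Q.1)) = Fin.castAdd Q.1 ⟨i, h⟩ := rfl
    simp only [val, sum, dif_pos (show i < P.1 + Q.1 by omega), dif_pos h, if_pos h, hi,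
      blockSum, Fin.addCases_left]
    cases s j <;> simp
  · rw [if_neg (by omega)]
    rcases lt_or_ge i (P.1 + Q.1) with h₂ | h₂
    · have hq : i - P.1 < Q.1 := by omega
      have hi : (⟨i, h₂⟩ : Fin (P.1 + Q.1)) = Fin.natAdd P.1 ⟨i - P.1, hq⟩ :=
        Fin.ext (by simp; omega)
      simp only [val, sum, dif_pos h₂, dif_pos hq, if_pos h₂, hi, blockSum,
        Fin.addCases_right]
      cases s j <;> simp
    · rw [if_neg (not_lt.mpr h₂)]
      exact dif_neg (not_lt.mpr h₂)

lemma sum_assoc (P Q R : SizedFn d) (s : Fin d → Bool) :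
    (P.sum Q s).sum R s = P.sum (Q.sum R s) s := by
  refine ext (Nat.add_assoc P.1 Q.1 R.1) fun i j => ?_
  have := P.val_cases i j
  have := Q.val_cases (i - P.1) j
  have := R.val_cases (i - (P.1 + Q.1)) j
  simp only [val_sum, size_sum, Nat.sub_sub]
  cases s j <;> simp only [Bool.false_eq_true, if_true, if_false] <;> split_ifs <;> omega

lemma nil_sum (Q : SizedFn d) (s : Fin d → Bool) : nil.sum Q s = Q := by
  refine ext (Nat.zero_add Q.1) fun i j => ?_
  have := Q.val_cases i j
  simp only [val_sum, nil, Nat.sub_zero]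
  split_ifs <;> omega

lemma sum_nil (P : SizedFn d) (s : Fin d → Bool) : P.sum nil s = P := by
  refine ext (Nat.add_zero P.1) fun i j => ?_
  have := P.val_cases i j
  simp only [val_sum, nil]
  split_ifs <;> omega

lemma eq_and_eq_of_sum_eq_sum {P Q P' Q' : SizedFn d} {s : Fin d → Bool}
    (h : P.sum Q s = P'.sum Q' s) (hsize : P.1 = P'.1) : P = P' ∧ Q = Q' := by
  have hsum : P.1 + Q.1 = P'.1 + Q'.1 := congrArg Sigma.fst h
  have hval : ∀ i j, (P.sum Q s).val i j = (P'.sum Q' s).val i j := by simp [h]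
  constructor
  · refine ext hsize fun i j => ?_
    have := hval i j
    have := P.val_cases i j
    have := P'.val_cases i j
    simp only [val_sum, ← hsize] at *
    split_ifs at * <;> omega
  · refine ext (by omega) fun i j => ?_
    have := hval (P.1 + i) j
    have := Q.val_cases i j
    have := Q'.val_cases i j
    simp only [val_sum, ← hsize, Nat.add_sub_cancel_left] at *
    split_ifs at * <;> omega

/-- `P` is a block sum with sign sequence `s` whose first block has size `a`. -/
def SplitsAt (P : SizedFn d) (s : Fin d → Bool) (a : ℕ) : Prop :=
  ∀ j : Fin d, ∀ i < P.1,
    if s j then (i < a ↔ P.val i j < a) else (i < a ↔ P.1 - a ≤ P.val i j)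

/-- Comparing the values at the first and the last position shows that a proper split
determines the sign in every coordinate. -/
lemma eq_of_splitsAt {P : SizedFn d} {s s' : Fin d → Bool} {a b : ℕ}
    (h : P.SplitsAt s a) (h' : P.SplitsAt s' b) (ha : 0 < a) (haP : a < P.1)
    (hb : 0 < b) (hbP : b < P.1) : s = s' := by
  funext j
  have hfirst := h j 0 (by omega)
  have hfirst' := h' j 0 (by omega)
  have hlast := h j (P.1 - 1) (by omega)
  have hlast' := h' j (P.1 - 1) (by omega)
  have := P.val_lt (show 0 < P.1 by omega) j
  have := P.val_lt (show P.1 - 1 < P.1 by omega) j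
  cases hs : s j <;> cases hs' : s' j <;>
    simp only [hs, hs', Bool.false_eq_true, if_true, if_false, Bool.true_eq_false] at hfirst hfirst' hlast hlast' ⊢ <;> omega

lemma splitsAt_sum (P Q : SizedFn d) (s : Fin d → Bool) : (P.sum Q s).SplitsAt s P.1 := by
  intro j i hi
  have := P.val_cases i j
  have := Q.val_cases (i - P.1) j
  rw [size_sum] at hi
  rw [val_sum, size_sum]
  cases s j <;> simp only [Bool.false_eq_true, if_true, if_false] <;> split_ifs <;> omega

lemma SplitsAt.of_sum_left {P Q : SizedFn d} {s : Fin d → Bool} {k : ℕ}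
    (h : (P.sum Q s).SplitsAt s k) : P.SplitsAt s k := by
  intro j i hi
  have hsum := h j i (by rw [size_sum]; omega)
  rw [val_sum, if_pos hi, size_sum] at hsum
  have := P.val_lt hi j
  cases hs : s j <;> simp only [hs, Bool.false_eq_true, if_true, if_false] at hsum ⊢ <;> omega

end SizedFn

namespace SignTree

variable {d : ℕ}

def LabelNe (s : Fin d → Bool) : SignTree d → Prop
  | .leaf => True
  | .node s' _ => s' ≠ s

mutual
  /-- The shape of the paper's sign trees `S(σ)`. -/
  def IsCanonical : SignTree d → Prop
    | .leaf => True
    | .node s ts => 2 ≤ ts.length ∧ ChildrenCanonical s ts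
  def ChildrenCanonical (s : Fin d → Bool) : List (SignTree d) → Prop
    | [] => True
    | t :: ts => t.IsCanonical ∧ t.LabelNe s ∧ ChildrenCanonical s ts
end

end SignTree

open SignTree

section treePerm

variable {d : ℕ}

lemma treePermList_nil (s : Fin d → Bool) : treePermList s [] = SizedFn.nil := rfl

lemma treePermList_cons (s : Fin d → Bool) (t : SignTree d) (ts : List (SignTree d)) :
    treePermList s (t :: ts) = SizedFn.sum (treePerm t) (treePermList s ts) s := rfl

lemma treePermList_singleton (s : Fin d → Bool) (t : SignTree d) :
    treePermList s [t] = treePerm t :=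
  SizedFn.sum_nil _ s

lemma treePermList_append (s : Fin d → Bool) (l₁ l₂ : List (SignTree d)) :
    treePermList s (l₁ ++ l₂) = SizedFn.sum (treePermList s l₁) (treePermList s l₂) s := by
  induction l₁ with
  | nil => rw [List.nil_append, treePermList_nil, SizedFn.nil_sum]
  | cons t ts ih => rw [List.cons_append, treePermList_cons, ih, treePermList_cons,
      SizedFn.sum_assoc]

mutual
  lemma one_le_size_treePerm : ∀ t : SignTree d, t.IsCanonical → 1 ≤ (treePerm t).1
    | .leaf, _ => le_rfl
    | .node s ts, ⟨hlen, hts⟩ => by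
        have := length_le_size_treePermList s ts hts
        exact (show 1 ≤ ts.length by omega).trans this
  lemma length_le_size_treePermList (s : Fin d → Bool) :
      ∀ ts : List (SignTree d), ChildrenCanonical s ts → ts.length ≤ (treePermList s ts).1
    | [], _ => le_rfl
    | t :: ts, ⟨ht, _, hts⟩ => by
        have := one_le_size_treePerm t ht
        have := length_le_size_treePermList s ts hts
        rw [treePermList_cons, SizedFn.size_sum, List.length_cons]
        omega
end

lemma two_le_size_treePermList {s : Fin d → Bool} {ts : List (SignTree d)}
    (hts : ChildrenCanonical s ts) (hlen : 2 ≤ ts.length) : 2 ≤ (treePermList s ts).1 :=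
  hlen.trans (length_le_size_treePermList s ts hts)

lemma exists_splitsAt_treePermList {s : Fin d → Bool} {ts : List (SignTree d)}
    (hts : ChildrenCanonical s ts) (hlen : 2 ≤ ts.length) :
    ∃ a, 0 < a ∧ a < (treePermList s ts).1 ∧ SizedFn.SplitsAt (treePermList s ts) s a := by
  match ts, hts, hlen with
  | t :: ts, ⟨ht, _, hts⟩, hlen =>
    have := one_le_size_treePerm t ht
    have := length_le_size_treePermList s ts hts
    rw [treePermList_cons, SizedFn.size_sum]
    refine ⟨(treePerm t).1, by omega, ?_, SizedFn.splitsAt_sum _ _ _⟩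
    simp only [List.length_cons] at hlen
    omega

/-- A child of a vertex labeled `s` is indecomposable with respect to `s`: a proper split
with sign `s` would clash with the split of the child with its own label. -/
lemma not_splitsAt_treePerm {s : Fin d → Bool} {t : SignTree d} (ht : t.IsCanonical)
    (hne : t.LabelNe s) {k : ℕ} (hk : 0 < k) (hkt : k < (treePerm t).1) :
    ¬ SizedFn.SplitsAt (treePerm t) s k := by
  intro hsplit
  match t, ht, hne with
  | .leaf, _, _ => exact absurd hkt (by simp [treePerm]; omega)
  | .node s' ts, ⟨hlen, hts⟩, hne =>
    obtain ⟨a, ha, haP, hsplit'⟩ := exists_splitsAt_treePermList hts hlen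
    exact hne (SizedFn.eq_of_splitsAt hsplit' hsplit ha haP hk hkt)

lemma size_le_of_sum_eq_sum {s : Fin d → Bool} {P Q Q' : SizedFn d} {t : SignTree d}
    (ht : t.IsCanonical) (hne : t.LabelNe s) (hP : 0 < P.1)
    (h : P.sum Q s = SizedFn.sum (treePerm t) Q' s) : (treePerm t).1 ≤ P.1 := by
  by_contra! hlt
  have hsplit := SizedFn.splitsAt_sum P Q s
  rw [h] at hsplit
  exact not_splitsAt_treePerm ht hne hP hlt hsplit.of_sum_left

mutual
  lemma eq_of_treePerm_eq : ∀ t₁ t₂ : SignTree d, t₁.IsCanonical → t₂.IsCanonical →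
      treePerm t₁ = treePerm t₂ → t₁ = t₂
    | .leaf, .leaf, _, _, _ => rfl
    | .leaf, .node s ts, _, ⟨hlen, hts⟩, h => by
        have := two_le_size_treePermList hts hlen
        have : 1 = (treePermList s ts).1 := congrArg Sigma.fst h
        omega
    | .node s ts, .leaf, ⟨hlen, hts⟩, _, h => by
        have := two_le_size_treePermList hts hlen
        have : (treePermList s ts).1 = 1 := congrArg Sigma.fst h
        omega
    | .node s₁ ts₁, .node s₂ ts₂, ⟨hlen₁, hts₁⟩, ⟨hlen₂, hts₂⟩, h => by
        have h : treePermList s₁ ts₁ = treePermList s₂ ts₂ := h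
        obtain rfl : s₁ = s₂ := by
          obtain ⟨a, ha, haP, hsplit₁⟩ := exists_splitsAt_treePermList hts₁ hlen₁
          obtain ⟨b, hb, hbP, hsplit₂⟩ := exists_splitsAt_treePermList hts₂ hlen₂
          rw [← h] at hsplit₂ hbP
          exact SizedFn.eq_of_splitsAt hsplit₁ hsplit₂ ha haP hb hbP
        rw [eq_of_treePermList_eq s₁ ts₁ ts₂ hts₁ hts₂ h]
  lemma eq_of_treePermList_eq (s : Fin d → Bool) :
      ∀ ts₁ ts₂ : List (SignTree d), ChildrenCanonical s ts₁ → ChildrenCanonical s ts₂ →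
        treePermList s ts₁ = treePermList s ts₂ → ts₁ = ts₂
    | [], [], _, _, _ => rfl
    | [], t :: ts, _, ⟨ht, _, _⟩, h => by
        have := one_le_size_treePerm t ht
        have : 0 = (treePerm t).1 + (treePermList s ts).1 := congrArg Sigma.fst h
        omega
    | t :: ts, [], ⟨ht, _, _⟩, _, h => by
        have := one_le_size_treePerm t ht
        have : (treePerm t).1 + (treePermList s ts).1 = 0 := congrArg Sigma.fst h
        omega
    | t₁ :: ts₁, t₂ :: ts₂, ⟨ht₁, hne₁, hts₁⟩, ⟨ht₂, hne₂, hts₂⟩, h => by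
        rw [treePermList_cons, treePermList_cons] at h
        have hsize := le_antisymm
          (size_le_of_sum_eq_sum ht₁ hne₁ (one_le_size_treePerm t₂ ht₂) h.symm)
          (size_le_of_sum_eq_sum ht₂ hne₂ (one_le_size_treePerm t₁ ht₁) h)
        obtain ⟨hhead, htail⟩ := SizedFn.eq_and_eq_of_sum_eq_sum h hsize
        rw [eq_of_treePerm_eq t₁ t₂ ht₁ ht₂ hhead, eq_of_treePermList_eq s ts₁ ts₂ hts₁ hts₂ htail]
end

mutual
  lemma isSep_treePerm : ∀ t : SignTree d, t.IsCanonical →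
      IsSep d (treePerm t).1 (treePerm t).2
    | .leaf, _ => IsSep.single _
    | .node s ts, ⟨hlen, hts⟩ => isSep_treePermList s ts hts (by rintro rfl; simp at hlen)
  lemma isSep_treePermList (s : Fin d → Bool) : ∀ ts : List (SignTree d),
      ChildrenCanonical s ts → ts ≠ [] → IsSep d (treePermList s ts).1 (treePermList s ts).2
    | [t], ⟨ht, _⟩, _ => treePermList_singleton s t ▸ isSep_treePerm t ht
    | t :: u :: us, ⟨ht, _, hts⟩, _ =>
        IsSep.sum _ _ s (isSep_treePerm t ht) (isSep_treePermList s (u :: us) hts (by simp))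
end

def childrenUnder (s : Fin d → Bool) : SignTree d → List (SignTree d)
  | .leaf => [.leaf]
  | .node s' ts => if s' = s then ts else [.node s' ts]

lemma treePermList_childrenUnder (s : Fin d → Bool) (t : SignTree d) :
    treePermList s (childrenUnder s t) = treePerm t := by
  match t with
  | .leaf => exact treePermList_singleton s _
  | .node s' ts =>
    rw [childrenUnder]
    split_ifs with hs
    · subst hs; rfl
    · exact treePermList_singleton s _

lemma childrenCanonical_childrenUnder {s : Fin d → Bool} {t : SignTree d}
    (ht : t.IsCanonical) : ChildrenCanonical s (childrenUnder s t) := by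
  match t, ht with
  | .leaf, _ => exact ⟨trivial, trivial, trivial⟩
  | .node s' ts, ht =>
    rw [childrenUnder]
    split_ifs with hs
    · exact hs ▸ ht.2
    · exact ⟨ht, hs, trivial⟩

lemma one_le_length_childrenUnder {s : Fin d → Bool} {t : SignTree d}
    (ht : t.IsCanonical) : 1 ≤ (childrenUnder s t).length := by
  match t, ht with
  | .leaf, _ => exact le_rfl
  | .node s' ts, ⟨hlen, _⟩ =>
    rw [childrenUnder]
    split_ifs
    · omega
    · exact le_rfl

lemma childrenCanonical_append {s : Fin d → Bool} {l₁ l₂ : List (SignTree d)}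
    (h₁ : ChildrenCanonical s l₁) (h₂ : ChildrenCanonical s l₂) :
    ChildrenCanonical s (l₁ ++ l₂) := by
  induction l₁ with
  | nil => exact h₂
  | cons t ts ih => exact ⟨h₁.1, h₁.2.1, ih h₁.2.2⟩

lemma exists_isCanonical_treePerm_eq {n : ℕ} {σ : Fin n → Fin d → Fin n} (h : IsSep d n σ) :
    ∃ S : SignTree d, S.IsCanonical ∧ treePerm S = ⟨n, σ⟩ := by
  induction h with
  | single σ =>
    refine ⟨.leaf, trivial, ?_⟩
    show (⟨1, fun _ _ => 0⟩ : SizedFn d) = ⟨1, σ⟩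
    congr
    funext i j
    exact Subsingleton.elim _ _
  | sum σ₁ σ₂ s _ _ ih₁ ih₂ =>
    obtain ⟨S₁, hS₁, he₁⟩ := ih₁
    obtain ⟨S₂, hS₂, he₂⟩ := ih₂
    refine ⟨.node s (childrenUnder s S₁ ++ childrenUnder s S₂), ⟨?_, ?_⟩, ?_⟩
    · have := one_le_length_childrenUnder (s := s) hS₁
      have := one_le_length_childrenUnder (s := s) hS₂
      rw [List.length_append]
      omega
    · exact childrenCanonical_append (childrenCanonical_childrenUnder hS₁)
        (childrenCanonical_childrenUnder hS₂)
    · show treePermList s _ = _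
      rw [treePermList_append, treePermList_childrenUnder, treePermList_childrenUnder, he₁, he₂]
      rfl

theorem treePerm_bijOn (n : ℕ) :
    Set.BijOn treePerm {S : SignTree d | S.IsCanonical ∧ (treePerm S).1 = n}
      {p : SizedFn d | p.1 = n ∧ IsSep d p.1 p.2} := by
  refine ⟨fun S ⟨hS, hn⟩ => ⟨hn, isSep_treePerm S hS⟩,
    fun S₁ hS₁ S₂ hS₂ h => eq_of_treePerm_eq S₁ S₂ hS₁.1 hS₂.1 h, ?_⟩
  rintro ⟨m, σ⟩ ⟨rfl, hσ⟩
  obtain ⟨S, hS, he⟩ := exists_isCanonical_treePerm_eq hσ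
  exact ⟨S, ⟨hS, by rw [he]⟩, he⟩

end treePerm

section swap

variable {d : ℕ}

mutual
  def toSwap (par : Fin d → Bool) : SignTree d → SwapTree d
    | .leaf => .leaf
    | .node s ts => .node (fun j => xor (par j) (s j)) (toSwapList s ts)
  def toSwapList (par : Fin d → Bool) : List (SignTree d) → List (SwapTree d)
    | [] => []
    | t :: ts => toSwap par t :: toSwapList par ts
end

def signToSwap : SignTree d → SwapTree d
  | .leaf => .leaf
  | .node s ts => .node s (toSwapList s ts)

mutual
  lemma toSign_toSwap : ∀ (par : Fin d → Bool) (t : SignTree d), toSign par (toSwap par t) = t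
    | _, .leaf => rfl
    | par, .node s ts => by
        have hs : (fun j => xor (par j) (xor (par j) (s j))) = s :=
          funext fun j => Bool.bne_self_left (par j) (s j)
        simp only [toSwap, toSign, hs, toSignList_toSwapList s ts]
  lemma toSignList_toSwapList :
      ∀ (par : Fin d → Bool) (ts : List (SignTree d)), toSignList par (toSwapList par ts) = ts
    | _, [] => rfl
    | par, t :: ts => by
        simp only [toSwapList, toSignList, toSign_toSwap par t, toSignList_toSwapList par ts]
end

lemma swapToSign_signToSwap (S : SignTree d) : swapToSign (signToSwap S) = S := by
  cases S with
  | leaf => rfl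
  | node s ts => simp only [signToSwap, swapToSign, toSignList_toSwapList]

mutual
  lemma toSwap_toSign : ∀ (par : Fin d → Bool) (t : SwapTree d), toSwap par (toSign par t) = t
    | _, .leaf => rfl
    | par, .node sw ts => by
        have hsw : (fun j => xor (par j) (xor (par j) (sw j))) = sw :=
          funext fun j => Bool.bne_self_left (par j) (sw j)
        simp only [toSign, toSwap, hsw, toSwapList_toSignList _ ts]
  lemma toSwapList_toSignList :
      ∀ (par : Fin d → Bool) (ts : List (SwapTree d)), toSwapList par (toSignList par ts) = ts
    | _, [] => rfl
    | par, t :: ts => by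
        simp only [toSignList, toSwapList, toSwap_toSign par t, toSwapList_toSignList par ts]
end

lemma signToSwap_swapToSign (T : SwapTree d) : signToSwap (swapToSign T) = T := by
  cases T with
  | leaf => rfl
  | node s ts => simp only [swapToSign, signToSwap, toSwapList_toSignList]

lemma length_toSignList (par : Fin d → Bool) :
    ∀ ts : List (SwapTree d), (toSignList par ts).length = ts.length
  | [] => rfl
  | _ :: ts => congrArg Nat.succ (length_toSignList par ts)

mutual
  lemma numLeavesSw_eq_size_treePerm_toSign :
      ∀ (par : Fin d → Bool) (t : SwapTree d), numLeavesSw t = (treePerm (toSign par t)).1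
    | _, .leaf => rfl
    | _, .node _ ts => numLeavesSwList_eq_size_treePermList _ ts
  lemma numLeavesSwList_eq_size_treePermList :
      ∀ (par : Fin d → Bool) (ts : List (SwapTree d)),
        numLeavesSwList ts = (treePermList par (toSignList par ts)).1
    | _, [] => rfl
    | par, t :: ts => by
        rw [numLeavesSwList, toSignList, treePermList_cons, SizedFn.size_sum,
          numLeavesSw_eq_size_treePerm_toSign par t, numLeavesSwList_eq_size_treePermList par ts]
end

lemma numLeavesSw_eq_size_treePerm_swapToSign (T : SwapTree d) :
    numLeavesSw T = (treePerm (swapToSign T)).1 := by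
  cases T with
  | leaf => rfl
  | node s ts => exact numLeavesSwList_eq_size_treePermList s ts

lemma xor_ne_self_iff (par sw : Fin d → Bool) :
    (fun j => xor (par j) (sw j)) ≠ par ↔ ∃ j, sw j = true := by
  simp only [Ne, funext_iff, not_forall]
  exact exists_congr fun j => by cases par j <;> cases sw j <;> decide

mutual
  lemma isCanonical_toSign_iff : ∀ (par : Fin d → Bool) (t : SwapTree d),
      (toSign par t).IsCanonical ∧ (toSign par t).LabelNe par ↔ ValidSwapAux t
    | _, .leaf => iff_of_true ⟨trivial, trivial⟩ trivial
    | par, .node sw ts => by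
        simp only [toSign, IsCanonical, LabelNe, ValidSwapAux, length_toSignList,
          childrenCanonical_toSignList_iff, xor_ne_self_iff]
        tauto
  lemma childrenCanonical_toSignList_iff : ∀ (par : Fin d → Bool) (ts : List (SwapTree d)),
      ChildrenCanonical par (toSignList par ts) ↔ ValidSwapAuxList ts
    | _, [] => Iff.rfl
    | par, t :: ts => by
        simp only [toSignList, ChildrenCanonical, ValidSwapAuxList, ← isCanonical_toSign_iff par t,
          childrenCanonical_toSignList_iff par ts, and_assoc]
end

lemma isCanonical_swapToSign_iff (T : SwapTree d) :
    (swapToSign T).IsCanonical ↔ ValidSwap T := by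
  cases T with
  | leaf => exact Iff.rfl
  | node s ts =>
    simp only [swapToSign, IsCanonical, ValidSwap, length_toSignList,
      childrenCanonical_toSignList_iff]

theorem swapToSign_bijOn (n : ℕ) :
    Set.BijOn swapToSign {T : SwapTree d | ValidSwap T ∧ numLeavesSw T = n}
      {S : SignTree d | S.IsCanonical ∧ (treePerm S).1 = n} := by
  refine Set.InvOn.bijOn ⟨fun T _ => signToSwap_swapToSign T, fun S _ => swapToSign_signToSwap S⟩
    ?_ ?_
  · rintro T ⟨hT, rfl⟩
    exact ⟨(isCanonical_swapToSign_iff T).2 hT, (numLeavesSw_eq_size_treePerm_swapToSign T).symm⟩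
  · rintro S ⟨hS, rfl⟩
    have hS' := swapToSign_signToSwap S
    exact ⟨(isCanonical_swapToSign_iff _).1 (by rwa [hS']),
      by rw [numLeavesSw_eq_size_treePerm_swapToSign, hS']⟩

end swap

/-- The swap-tree encoding is a bijection: the map sending a swap tree to the
`(d+1)`-separable permutation of its associated sign tree is a bijection from swap trees
with `n` leaves onto `(d+1)`-separable permutations of size `n`. -/
theorem swap_tree_bijection (d n : ℕ) :
    Set.BijOn (fun T => treePerm (swapToSign T))
      {T : SwapTree d | ValidSwap T ∧ numLeavesSw T = n}
      {p : (m : ℕ) × (Fin m → Fin d → Fin m) | p.1 = n ∧ IsSep d p.1 p.2} := by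
  exact (treePerm_bijOn n).comp (swapToSign_bijOn n)
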